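/- arXiv:2512.15412 — 2 statements merged into one kernel-verified Lean document; each statement's English description precedes it below -/
import Mathlib

section
/- Let ψ ∈ ℂⁿ be a unit vector, ρ := ψψᴴ, C an arbitrary n×n complex matrix, and A := (C + Cᴴ)/2. Then ⁅ ⁅AC + CᴴA, ρ⁆ + (1/2)(C² − (Cᴴ)²), ρ ⁆ = C²ρ + ρ(Cᴴ)² + (CᴴC)ρ + ρ(CᴴC) − 2·tr((AC + CᴴA)ρ)·ρ. That is, the dissipative part of the stochastic master equation, {C², ρ}_c + {C†C, ρ} − 2⟨{C^H, C}_c⟩ρ, can be written as a commutator with the state, defining the dissipation Hamiltonian of the monitored dynamics. -/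
/-!
For a pure state the rank-one projection `ρ` is idempotent and compresses every operator to a
multiple of itself, `ρ X ρ = tr(X ρ) ρ`. Expanding the double commutator with `ρ² = ρ` leaves
`(B + D) ρ + ρ (B - D) - 2 ρ B ρ` for `B = AC + CᴴA`, `D = (C² - Cᴴ²)/2`, and with `A = (C + Cᴴ)/2`
one has `B + D = C² + CᴴC` and `B - D = Cᴴ² + CᴴC`.
-/

open Matrix

section RankOne

variable {m α : Type*} [Fintype m] [CommSemiring α]

theorem isIdempotentElem_vecMulVec {u v : m → α} (h : v ⬝ᵥ u = 1) :
    IsIdempotentElem (vecMulVec u v) := by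
  rw [IsIdempotentElem, vecMulVec_mul_vecMulVec, h, one_smul]

theorem vecMulVec_mul_mul_vecMulVec_self (u v : m → α) (X : Matrix m m α) :
    vecMulVec u v * X * vecMulVec u v = (X * vecMulVec u v).trace • vecMulVec u v := by
  rw [Matrix.mul_assoc, mul_vecMulVec, vecMulVec_mul_vecMulVec, trace_vecMulVec,
    dotProduct_comm, vecMulVec_smul]

end RankOne

theorem lie_lie_add_of_isIdempotentElem {R : Type*} [Ring R] {P : R} (hP : IsIdempotentElem P)
    (B D : R) : ⁅⁅B, P⁆ + D, P⁆ = (B + D) * P + P * (B - D) - 2 • (P * B * P) := by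
  have expand : ⁅⁅B, P⁆ + D, P⁆ = B * (P * P) + (P * P) * B + D * P - P * D
      - 2 • (P * B * P) := by
    simp only [Ring.lie_def]
    noncomm_ring
  rw [expand, hP.eq]
  noncomm_ring

section HalfSum

variable {𝕜 R : Type*} [Field 𝕜] [CharZero 𝕜] [Ring R] [Algebra 𝕜 R] (X Y : R)

theorem half_smul_add_mul_add_mul_half_smul_add_add_half_smul_sq_sub_sq :
    (1 / 2 : 𝕜) • (X + Y) * X + Y * ((1 / 2 : 𝕜) • (X + Y)) + (1 / 2 : 𝕜) • (X ^ 2 - Y ^ 2)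
      = X ^ 2 + Y * X := by
  simp only [smul_mul_assoc, mul_smul_comm, add_mul, mul_add, pow_two]
  module

theorem half_smul_add_mul_add_mul_half_smul_add_sub_half_smul_sq_sub_sq :
    (1 / 2 : 𝕜) • (X + Y) * X + Y * ((1 / 2 : 𝕜) • (X + Y)) - (1 / 2 : 𝕜) • (X ^ 2 - Y ^ 2)
      = Y ^ 2 + Y * X := by
  simp only [smul_mul_assoc, mul_smul_comm, add_mul, mul_add, pow_two]
  module

end HalfSum

/-- For a pure state `ρ = ψψᴴ` with `ψ` a unit vector and an arbitrary jump
operator `C` with Hermitian part `A = (C + Cᴴ)/2`, the dissipative part of the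
stochastic master equation is a commutator with the state:
`⁅⁅AC + CᴴA, ρ⁆ + (1/2)(C² − (Cᴴ)²), ρ⁆
  = C²ρ + ρ(Cᴴ)² + (CᴴC)ρ + ρ(CᴴC) − 2·tr((AC + CᴴA)ρ)·ρ`. -/
theorem dissipation_hamiltonian
    (n : ℕ) (ψ : Fin n → ℂ) (hψ : star ψ ⬝ᵥ ψ = 1)
    (C : Matrix (Fin n) (Fin n) ℂ) :
    let ρ : Matrix (Fin n) (Fin n) ℂ := vecMulVec ψ (star ψ)
    let A : Matrix (Fin n) (Fin n) ℂ := ((1 : ℂ) / 2) • (C + Cᴴ)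
    ⁅⁅A * C + Cᴴ * A, ρ⁆ + ((1 : ℂ) / 2) • (C ^ 2 - Cᴴ ^ 2), ρ⁆
      = C ^ 2 * ρ + ρ * Cᴴ ^ 2 + (Cᴴ * C) * ρ + ρ * (Cᴴ * C)
        - (2 * ((A * C + Cᴴ * A) * ρ).trace) • ρ := by
  intro ρ A
  rw [lie_lie_add_of_isIdempotentElem (isIdempotentElem_vecMulVec hψ),
    half_smul_add_mul_add_mul_half_smul_add_add_half_smul_sq_sub_sq,
    half_smul_add_mul_add_mul_half_smul_add_sub_half_smul_sq_sub_sq,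
    vecMulVec_mul_mul_vecMulVec_self, add_mul, mul_add]
  module
end

section
/- Let H₀ be a Hermitian n×n complex matrix, E₀ a real number with E₀²·1 ≤ H₀² in the Loewner order (i.e. H₀² − E₀²·1 is positive semidefinite), and Π₀ a Hermitian matrix with Π₀² = Π₀, H₀Π₀ = E₀·Π₀ and Π₀H₀ = E₀·Π₀ (the ground-state eigenprojector). Let γ ≥ 0, let ψ : ℝ → ℂⁿ be differentiable with ‖ψ(t)‖ = 1, set ρ(t) := ψ(t)ψ(t)ᴴ, and suppose ρ'(t) = −i⁅H₀, ρ(t)⁆ − γ·⁅⁅H₀², ρ(t)⁆, ρ(t)⁆. Then d/dt tr(Π₀ ρ(t)) ≥ 0 for all t: the ground-state population is nondecreasing along the feedback-induced double-bracket flow. -/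
open Matrix
open scoped ComplexOrder

attribute [local instance] Matrix.normedAddCommGroup Matrix.normedSpace

/-!
The unitary part `-i⁅H₀, ρ⁆` does not move `tr(P₀ρ)`, because `P₀` is an eigenprojector of `H₀`.
Since `ρ² = ρ` for a pure state and `P₀` is also an eigenprojector of `H₀²`, the double bracket
contributes `2γ · tr(P₀ ρ (H₀² - E₀²) ρ)`, the trace of `P₀` against a congruence of the positive
semidefinite matrix `H₀² - E₀²`, hence nonnegative.
-/

namespace Matrix

variable {n : Type*} [Fintype n]

lemma isIdempotentElem_vecMulVec_of_dotProduct_eq_one {α : Type*} [Semiring α] {u v : n → α}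
    (h : v ⬝ᵥ u = 1) : IsIdempotentElem (vecMulVec u v) := by
  rw [IsIdempotentElem, vecMulVec_mul_vecMulVec, h, one_smul]

section Eigenprojector

variable {R : Type*} [CommRing R] {P A : Matrix n n R} {c : R}

lemma trace_mul_lie_eq_zero (hPA : P * A = c • P) (hAP : A * P = c • P) (X : Matrix n n R) :
    (P * ⁅A, X⁆).trace = 0 := by
  rw [Ring.lie_def, Matrix.mul_sub, trace_sub, ← Matrix.mul_assoc, ← Matrix.mul_assoc, hPA,
    trace_mul_cycle, hAP, sub_self]

variable [DecidableEq n]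

lemma pow_mul_eq_smul_of_mul_eq_smul (h : A * P = c • P) (k : ℕ) : A ^ k * P = c ^ k • P := by
  induction k with
  | zero => simp
  | succ k ih => rw [pow_succ, Matrix.mul_assoc, h, Matrix.mul_smul, ih, smul_smul, pow_succ']

lemma mul_pow_eq_smul_of_mul_eq_smul (h : P * A = c • P) (k : ℕ) : P * A ^ k = c ^ k • P := by
  induction k with
  | zero => simp
  | succ k ih => rw [pow_succ', ← Matrix.mul_assoc, h, Matrix.smul_mul, ih, smul_smul, pow_succ']

lemma trace_mul_lie_lie_of_isIdempotentElem (hPA : P * A = c • P) (hAP : A * P = c • P)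
    {ρ : Matrix n n R} (hρ : IsIdempotentElem ρ) :
    (P * ⁅⁅A, ρ⁆, ρ⁆).trace = -2 * (P * (ρ * (A - c • 1) * ρ)).trace := by
  have hPAρ : (P * (A * ρ)).trace = c * (P * ρ).trace := by
    rw [← Matrix.mul_assoc, hPA, Matrix.smul_mul, trace_smul, smul_eq_mul]
  have hPρA : (P * (ρ * A)).trace = c * (P * ρ).trace := by
    rw [← Matrix.mul_assoc, trace_mul_cycle, hAP, Matrix.smul_mul, trace_smul, smul_eq_mul]
  have hexpand : ⁅⁅A, ρ⁆, ρ⁆ = A * ρ + ρ * A - 2 • (ρ * A * ρ) := by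
    rw [Ring.lie_def, Ring.lie_def, Matrix.sub_mul, Matrix.mul_sub, Matrix.mul_assoc A,
      ← Matrix.mul_assoc ρ ρ, hρ.eq, ← Matrix.mul_assoc ρ A ρ, two_smul]
    abel
  simp only [hexpand, Matrix.mul_add, Matrix.mul_sub, Matrix.sub_mul, Matrix.mul_smul,
    Matrix.smul_mul, Matrix.mul_one, hρ.eq, trace_add, trace_sub, trace_smul, smul_eq_mul, hPAρ,
    hPρA]
  ring

end Eigenprojector

lemma PosSemidef.trace_mul_nonneg_of_isHermitian_of_isIdempotentElem {R : Type*} [CommRing R]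
    [PartialOrder R] [StarRing R] [AddLeftMono R] {P Q : Matrix n n R} (hQ : Q.PosSemidef)
    (hP : P.IsHermitian) (hP2 : IsIdempotentElem P) : 0 ≤ (P * Q).trace := by
  rw [show (P * Q).trace = (Pᴴ * Q * P).trace by rw [hP.eq, trace_mul_cycle, hP2.eq]]
  exact (hQ.conjTranspose_mul_mul_same P).trace_nonneg

lemma _root_.HasDerivAt.trace_mul_left {𝕜 : Type*} [RCLike 𝕜] {ρ : ℝ → Matrix n n 𝕜}
    {ρ' : Matrix n n 𝕜} {t : ℝ} (hρ : HasDerivAt ρ ρ' t) (P : Matrix n n 𝕜) :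
    HasDerivAt (fun s => (P * ρ s).trace) (P * ρ').trace t :=
  let L : Matrix n n 𝕜 →ₗ[ℝ] 𝕜 :=
    ((traceLinearMap n 𝕜 𝕜).comp (LinearMap.mulLeft 𝕜 P)).restrictScalars ℝ
  L.toContinuousLinearMap.hasFDerivAt.comp_hasDerivAt t hρ

end Matrix

theorem ground_state_population_nondecreasing_general
    (n : ℕ) (H₀ P₀ : Matrix (Fin n) (Fin n) ℂ)
    (E₀ : ℝ)
    (hLoewner : (H₀ ^ 2 - ((E₀ : ℂ) ^ 2) • (1 : Matrix (Fin n) (Fin n) ℂ)).PosSemidef)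
    (hPherm : P₀ᴴ = P₀) (hP2 : P₀ * P₀ = P₀)
    (hPE : H₀ * P₀ = (E₀ : ℂ) • P₀) (hEP : P₀ * H₀ = (E₀ : ℂ) • P₀)
    (γ : ℝ) (hγ : 0 ≤ γ)
    (ψ : ℝ → Fin n → ℂ)
    (hunit : ∀ t, star (ψ t) ⬝ᵥ ψ t = 1)
    (ρ : ℝ → Matrix (Fin n) (Fin n) ℂ)
    (hρ : ∀ t, ρ t = vecMulVec (ψ t) (star (ψ t)))
    (hρ' : ∀ t, HasDerivAt ρ
      ((-Complex.I) • ⁅H₀, ρ t⁆ - (γ : ℂ) • ⁅⁅H₀ ^ 2, ρ t⁆, ρ t⁆) t) :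
    ∀ t, ∀ d : ℂ, HasDerivAt (fun s => (P₀ * ρ s).trace) d t → 0 ≤ d := by
  intro t d hd
  set B := H₀ ^ 2 - ((E₀ : ℂ) ^ 2) • (1 : Matrix (Fin n) (Fin n) ℂ)
  have hρ_idem : IsIdempotentElem (ρ t) :=
    hρ t ▸ isIdempotentElem_vecMulVec_of_dotProduct_eq_one (hunit t)
  have hρ_herm : (ρ t).IsHermitian := hρ t ▸ (posSemidef_vecMulVec_self_star (ψ t)).isHermitian
  have hd_eq : d = 2 * (γ : ℂ) * (P₀ * (ρ t * B * ρ t)).trace := by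
    rw [hd.unique ((hρ' t).trace_mul_left P₀), Matrix.mul_sub, Matrix.mul_smul, Matrix.mul_smul,
      trace_sub, trace_smul, trace_smul, trace_mul_lie_eq_zero hEP hPE,
      trace_mul_lie_lie_of_isIdempotentElem (mul_pow_eq_smul_of_mul_eq_smul hEP 2)
        (pow_mul_eq_smul_of_mul_eq_smul hPE 2) hρ_idem, smul_eq_mul, smul_eq_mul]
    ring
  have htrace_nonneg : 0 ≤ (P₀ * (ρ t * B * ρ t)).trace := by
    refine PosSemidef.trace_mul_nonneg_of_isHermitian_of_isIdempotentElem ?_ hPherm hP2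
    simpa only [hρ_herm.eq] using hLoewner.conjTranspose_mul_mul_same (ρ t)
  rw [hd_eq]
  exact mul_nonneg (mul_nonneg zero_le_two (by exact_mod_cast hγ)) htrace_nonneg

/-- Along the feedback-induced double-bracket flow
`ρ'(t) = −i⁅H₀, ρ(t)⁆ − γ⁅⁅H₀², ρ(t)⁆, ρ(t)⁆` of a pure state
`ρ(t) = ψ(t)ψ(t)ᴴ`, the ground-state population `tr(P₀ρ(t))` is nondecreasing:
its derivative is nonnegative for all `t`. Here `E₀²·1 ≤ H₀²` in the Loewner
order and `P₀` is the ground-state eigenprojector with eigenvalue `E₀`. -/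
theorem ground_state_population_nondecreasing
    (n : ℕ) (H₀ P₀ : Matrix (Fin n) (Fin n) ℂ)
    (hH : H₀ᴴ = H₀) (E₀ : ℝ)
    (hLoewner : (H₀ ^ 2 - ((E₀ : ℂ) ^ 2) • (1 : Matrix (Fin n) (Fin n) ℂ)).PosSemidef)
    (hPherm : P₀ᴴ = P₀) (hP2 : P₀ * P₀ = P₀)
    (hPE : H₀ * P₀ = (E₀ : ℂ) • P₀) (hEP : P₀ * H₀ = (E₀ : ℂ) • P₀)
    (γ : ℝ) (hγ : 0 ≤ γ)
    (ψ : ℝ → Fin n → ℂ) (hψ : Differentiable ℝ ψ)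
    (hunit : ∀ t, star (ψ t) ⬝ᵥ ψ t = 1)
    (ρ : ℝ → Matrix (Fin n) (Fin n) ℂ)
    (hρ : ∀ t, ρ t = vecMulVec (ψ t) (star (ψ t)))
    (hρ' : ∀ t, HasDerivAt ρ
      ((-Complex.I) • ⁅H₀, ρ t⁆ - (γ : ℂ) • ⁅⁅H₀ ^ 2, ρ t⁆, ρ t⁆) t) :
    ∀ t, ∀ d : ℂ, HasDerivAt (fun s => (P₀ * ρ s).trace) d t → 0 ≤ d :=
  ground_state_population_nondecreasing_general n H₀ P₀ E₀ hLoewner hPherm hP2 hPE hEP γ hγ ψ hunit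
    ρ hρ hρ'
end
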